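/- Let V be a finite-dimensional vector space over a field K with a nondegenerate alternating bilinear form ω, let L₁, L₂ ⊆ V be Lagrangian subspaces, and let M ⊆ L₁ be a subspace such that V = L₂ + M^⊥, where M^⊥ = {v ∈ V : ω(v, m) = 0 for all m ∈ M}. Then: (1) L₂ ∩ M = 0; (2) M ⊆ L₁ ⊆ M^⊥, and ω descends to a well-defined nondegenerate alternating bilinear form ω̄ on the quotient M^⊥/M (i.e., ω̄(x + M, y + M) = ω(x, y) for x, y ∈ M^⊥); (3) the images of L₁ and of L₂ ∩ M^⊥ in M^⊥/M are Lagrangian subspaces with respect to ω̄. (Symplectic reduction of a pair of Lagrangians by an isotropic subspace.) -/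

import Mathlib

/-!
An alternating form is reflexive, so in finite dimension, for nondegenerate `ω`, taking
`ω`-orthogonals is an inclusion-reversing involution on subspaces turning `⊔` into `⊓`.
Hence `L₂ ∩ M = L₂^⊥ ∩ M^⊥⊥ = (L₂ + M^⊥)^⊥ = V^⊥ = 0`.

Every `m ∈ M ⊆ M^⊥` is orthogonal to all of `M^⊥`, so `ω|_{M^⊥}` descends to `M^⊥/M`, and
`M^⊥⊥ = M` makes the descended form nondegenerate. For `W ⊆ M^⊥`, the class of `n ∈ M^⊥` is
orthogonal to the image of `W` iff `n ∈ W^⊥`, and lies in that image iff `n ∈ W + M`; so the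
image is Lagrangian once `W^⊥ ∩ M^⊥ = W + M`. For `W = L₁` this is `L₁^⊥ = L₁ ⊇ M`, and for
`W = L₂ ∩ M^⊥ = (L₂ + M)^⊥` it is the modular law `(L₂ + M) ∩ M^⊥ = (L₂ ∩ M^⊥) + M`.
-/

/-- The orthogonal complement `{v | ∀ l ∈ L, ω v l = 0}` of a subspace `L` with respect to a
bilinear form `ω`. -/
def symplecticOrth {K V : Type*} [Field K] [AddCommGroup V] [Module K V]
    (ω : V →ₗ[K] V →ₗ[K] K) (L : Submodule K V) : Submodule K V where
  carrier := {v | ∀ l ∈ L, ω v l = 0}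
  add_mem' := by
    intro a b ha hb l hl
    simp [ha l hl, hb l hl]
  zero_mem' := by
    intro l hl
    simp
  smul_mem' := by
    intro c a ha l hl
    simp [ha l hl]

section SymplecticReduction

variable {K V : Type*} [Field K] [AddCommGroup V] [Module K V] {ω : V →ₗ[K] V →ₗ[K] K}

theorem symplecticOrth_anti {A B : Submodule K V} (h : A ≤ B) :
    symplecticOrth ω B ≤ symplecticOrth ω A :=
  fun _ hv l hl => hv l (h hl)

theorem symplecticOrth_sup (A B : Submodule K V) :
    symplecticOrth ω (A ⊔ B) = symplecticOrth ω A ⊓ symplecticOrth ω B := by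
  refine le_antisymm (le_inf (symplecticOrth_anti le_sup_left)
    (symplecticOrth_anti le_sup_right)) ?_
  rintro v ⟨hA, hB⟩ l hl
  obtain ⟨a, ha, b, hb, rfl⟩ := Submodule.mem_sup.1 hl
  simp [hA a ha, hB b hb]

theorem symplecticOrth_top (hnd : ω.SeparatingLeft) : symplecticOrth ω ⊤ = ⊥ :=
  eq_bot_iff.2 fun v hv => (Submodule.mem_bot K).2 (hnd v fun w => hv w Submodule.mem_top)

theorem LinearMap.IsRefl.symplecticOrth_eq_orthogonal (hω : ω.IsRefl) (L : Submodule K V) :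
    symplecticOrth ω L = LinearMap.BilinForm.orthogonal ω L := by
  ext v
  exact ⟨fun hv l hl => hω v l (hv l hl), fun hv l hl => hω l v (hv l hl)⟩

theorem symplecticOrth_symplecticOrth [FiniteDimensional K V] (hω : ω.IsRefl)
    (hnd : ω.SeparatingLeft) (W : Submodule K V) :
    symplecticOrth ω (symplecticOrth ω W) = W := by
  rw [hω.symplecticOrth_eq_orthogonal, hω.symplecticOrth_eq_orthogonal]
  exact LinearMap.BilinForm.orthogonal_orthogonal
    (hω.nondegenerate_iff_separatingLeft.2 hnd) hω W

theorem Submodule.mk_mem_map_mkQ_comap_subtype_iff {N M W : Submodule K V} (hW : W ≤ N)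
    (n : N) :
    Submodule.Quotient.mk n ∈ (W.comap N.subtype).map (M.comap N.subtype).mkQ ↔
      (n : V) ∈ W ⊔ M := by
  constructor
  · rintro ⟨x, hx, hxn⟩
    have hxn : (x : V) - n ∈ M := (Submodule.Quotient.eq (M.comap N.subtype)).1 hxn
    have : (n : V) = x - (x - n) := by abel
    exact this ▸ Submodule.sub_mem_sup hx hxn
  · intro hn
    obtain ⟨w, hw, m, hm, hwm⟩ := Submodule.mem_sup.1 hn
    refine ⟨⟨w, hW hw⟩, hw, (Submodule.Quotient.eq _).2 ?_⟩
    have : w - n = -m := by rw [← hwm]; abel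
    simpa [this] using hm

section Reduction

variable (M : Submodule K V)

/-- The form induced by `ω` on the reduction `M^⊥ / (M ∩ M^⊥)`. -/
def reducedForm (hω : ω.IsRefl) :
    (↥(symplecticOrth ω M) ⧸ M.comap (symplecticOrth ω M).subtype) →ₗ[K]
      (↥(symplecticOrth ω M) ⧸ M.comap (symplecticOrth ω M).subtype) →ₗ[K] K :=
  LinearMap.IsRefl.liftQ₂ (ω.domRestrict₁₂ _ _) _ (hω.domRestrict _)
    fun m hm => LinearMap.ext fun n => hω _ _ (n.2 m hm)

theorem reducedForm_mk (hω : ω.IsRefl) (x y : symplecticOrth ω M) :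
    reducedForm M hω (Submodule.Quotient.mk x) (Submodule.Quotient.mk y) = ω x y :=
  rfl

theorem reducedForm_isAlt (hω : ω.IsAlt) : (reducedForm M hω.isRefl).IsAlt := by
  intro q
  obtain ⟨n, rfl⟩ := Submodule.Quotient.mk_surjective _ q
  exact hω n

theorem reducedForm_separatingLeft [FiniteDimensional K V] (hω : ω.IsRefl)
    (hnd : ω.SeparatingLeft) : (reducedForm M hω).SeparatingLeft := by
  intro q hq
  obtain ⟨n, rfl⟩ := Submodule.Quotient.mk_surjective _ q
  have hnM : (n : V) ∈ symplecticOrth ω (symplecticOrth ω M) :=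
    fun l hl => hq (Submodule.Quotient.mk ⟨l, hl⟩)
  rw [symplecticOrth_symplecticOrth hω hnd] at hnM
  exact (Submodule.Quotient.mk_eq_zero _).2 hnM

theorem mk_mem_symplecticOrth_reducedForm_iff (hω : ω.IsRefl) {W : Submodule K V}
    (hW : W ≤ symplecticOrth ω M) (n : symplecticOrth ω M) :
    Submodule.Quotient.mk n ∈ symplecticOrth (reducedForm M hω)
        ((W.comap (symplecticOrth ω M).subtype).map (M.comap (symplecticOrth ω M).subtype).mkQ) ↔
      (n : V) ∈ symplecticOrth ω W := by
  constructor
  · intro h l hl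
    exact h _ ⟨⟨l, hW hl⟩, hl, rfl⟩
  · rintro h _ ⟨y, hy, rfl⟩
    exact h y hy

theorem reducedForm_map_eq_symplecticOrth (hω : ω.IsRefl) {W : Submodule K V}
    (hW : W ≤ symplecticOrth ω M)
    (hWorth : symplecticOrth ω W ⊓ symplecticOrth ω M = W ⊔ M) :
    (W.comap (symplecticOrth ω M).subtype).map (M.comap (symplecticOrth ω M).subtype).mkQ =
      symplecticOrth (reducedForm M hω)
        ((W.comap (symplecticOrth ω M).subtype).map
          (M.comap (symplecticOrth ω M).subtype).mkQ) := by
  ext q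
  obtain ⟨n, rfl⟩ := Submodule.Quotient.mk_surjective _ q
  rw [mk_mem_symplecticOrth_reducedForm_iff M hω hW,
    Submodule.mk_mem_map_mkQ_comap_subtype_iff hW, ← hWorth]
  exact ⟨fun h => h.1, fun h => ⟨h, n.2⟩⟩

end Reduction

end SymplecticReduction

theorem stmt_10 {K V : Type*} [Field K] [AddCommGroup V] [Module K V] [FiniteDimensional K V]
    (ω : V →ₗ[K] V →ₗ[K] K)
    (halt : ∀ v, ω v v = 0)
    (hnd : ∀ v, (∀ w, ω v w = 0) → v = 0)
    (L₁ L₂ : Submodule K V)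
    (hL₁ : L₁ = symplecticOrth ω L₁)
    (hL₂ : L₂ = symplecticOrth ω L₂)
    (M : Submodule K V) (hM : M ≤ L₁)
    (hsum : L₂ ⊔ symplecticOrth ω M = ⊤) :
    L₂ ⊓ M = ⊥ ∧
    L₁ ≤ symplecticOrth ω M ∧
    ∃ ωbar : (↥(symplecticOrth ω M) ⧸ M.comap (symplecticOrth ω M).subtype) →ₗ[K]
        (↥(symplecticOrth ω M) ⧸ M.comap (symplecticOrth ω M).subtype) →ₗ[K] K,
      (∀ x y : ↥(symplecticOrth ω M),
        ωbar (Submodule.Quotient.mk x) (Submodule.Quotient.mk y) = ω (x : V) (y : V)) ∧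
      (∀ q, ωbar q q = 0) ∧
      (∀ q, (∀ q', ωbar q q' = 0) → q = 0) ∧
      (Submodule.map (M.comap (symplecticOrth ω M).subtype).mkQ
          (L₁.comap (symplecticOrth ω M).subtype) =
        symplecticOrth ωbar (Submodule.map (M.comap (symplecticOrth ω M).subtype).mkQ
          (L₁.comap (symplecticOrth ω M).subtype))) ∧
      (Submodule.map (M.comap (symplecticOrth ω M).subtype).mkQ
          ((L₂ ⊓ symplecticOrth ω M).comap (symplecticOrth ω M).subtype) =
        symplecticOrth ωbar (Submodule.map (M.comap (symplecticOrth ω M).subtype).mkQ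
          ((L₂ ⊓ symplecticOrth ω M).comap (symplecticOrth ω M).subtype))) := by
  have hω : ω.IsRefl := LinearMap.IsAlt.isRefl halt
  have hL₁M : L₁ ≤ symplecticOrth ω M := hL₁.le.trans (symplecticOrth_anti hM)
  have hMM : M ≤ symplecticOrth ω M := hM.trans hL₁M
  have hL₂M : L₂ ⊓ symplecticOrth ω M = symplecticOrth ω (L₂ ⊔ M) := by
    rw [symplecticOrth_sup, ← hL₂]
  refine ⟨?_, hL₁M, reducedForm M hω, reducedForm_mk M hω, reducedForm_isAlt M halt,
    reducedForm_separatingLeft M hω hnd, ?_, ?_⟩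
  · rw [← symplecticOrth_top hnd, ← hsum, symplecticOrth_sup, ← hL₂,
      symplecticOrth_symplecticOrth hω hnd]
  · refine reducedForm_map_eq_symplecticOrth M hω hL₁M ?_
    rw [← hL₁, inf_eq_left.2 hL₁M, sup_eq_left.2 hM]
  · refine reducedForm_map_eq_symplecticOrth M hω inf_le_right ?_
    rw [hL₂M, symplecticOrth_symplecticOrth hω hnd, ← hL₂M, sup_comm, sup_comm _ M,
      sup_inf_assoc_of_le _ hMM]
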